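/- arXiv:2605.29095 — 6 statements merged into one kernel-verified Lean document; each statement's English description precedes it below -/
import Mathlib

section
/- For 0 ≤ r < 1, the integral over θ ∈ [0, 2π] of (log|1 - r e^{iθ}|)² dθ equals π · Li₂(r²). -/
/-!
Expanding `-log (1 - z) = ∑ zⁿ⁺¹/(n+1)` at `z = r e^{iθ}` and taking real parts gives the cosine
series `log |1 - r e^{iθ}| = -∑ rⁿ⁺¹ cos ((n+1)θ)/(n+1)`, which converges absolutely and uniformly
in `θ`. Squaring it, integrating term by term and using the orthogonality of the cosines on
`[0, 2π]` leaves `π ∑ r²⁽ⁿ⁺¹⁾/(n+1)² = π Li₂(r²)` (Parseval).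
-/

open Real MeasureTheory

lemma integral_cos_int_mul {k : ℤ} (hk : k ≠ 0) :
    ∫ θ in (0:ℝ)..(2 * π), cos (k * θ) = 0 := by
  rw [intervalIntegral.integral_comp_mul_left cos (Int.cast_ne_zero.mpr hk)]
  simp only [mul_zero, integral_cos, Real.sin_zero, sub_zero]
  rw [show (k:ℝ) * (2 * π) = (2 * k : ℤ) * π by push_cast; ring, Real.sin_int_mul_pi, smul_zero]

lemma integral_cos_nat_mul_mul_cos_nat_mul {n : ℕ} (m : ℕ) (hn : n ≠ 0) :
    ∫ θ in (0:ℝ)..(2 * π), cos (n * θ) * cos (m * θ) = if n = m then π else 0 := by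
  have product_to_sum (θ : ℝ) : cos (n * θ) * cos (m * θ)
      = (cos ((n - m : ℤ) * θ) + cos ((n + m : ℤ) * θ)) / 2 := by
    push_cast
    rw [sub_mul, add_mul, Real.cos_sub, Real.cos_add]
    ring
  have hcont (k : ℤ) : IntervalIntegrable (fun θ => cos (k * θ)) volume 0 (2 * π) :=
    (Real.continuous_cos.comp (continuous_const_mul _)).intervalIntegrable _ _
  simp_rw [product_to_sum]
  rw [intervalIntegral.integral_div, intervalIntegral.integral_add (hcont _) (hcont _),
    integral_cos_int_mul (k := n + m) (by omega)]
  split_ifs with h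
  · simp [h]
  · rw [integral_cos_int_mul (by omega)]
    simp

lemma integral_cos_succ_mul_cos_succ (n m : ℕ) :
    ∫ θ in (0:ℝ)..(2 * π), cos ((n + 1) * θ) * cos ((m + 1) * θ)
      = if n = m then π else 0 := by
  have h := integral_cos_nat_mul_mul_cos_nat_mul (m + 1) (Nat.add_one_ne_zero n)
  push_cast at h
  simpa only [Nat.add_right_cancel_iff] using h

lemma hasSum_ite_eq_diag_iff {α M : Type*} [AddCommMonoid M] [TopologicalSpace M] [DecidableEq α]
    {g : α → M} {a : M} :
    HasSum (fun p : α × α => if p.1 = p.2 then g p.1 else 0) a ↔ HasSum g a := by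
  refine (Function.diag_injective.hasSum_iff fun p hp =>
    if_neg fun h => hp ⟨p.1, Prod.ext rfl h⟩).symm.trans ?_
  simp only [Function.comp_def, Function.diag, if_true]

theorem integral_sq_eq_of_hasSum_cos {c : ℕ → ℝ} {f : ℝ → ℝ}
    (hf : ∀ θ, HasSum (fun n : ℕ => c n * cos ((n + 1) * θ)) (f θ)) :
    ∫ θ in (0:ℝ)..(2 * π), f θ ^ 2 = π * ∑' n, c n ^ 2 := by
  have hc : Summable c := by simpa using (hf 0).summable
  set F : ℕ × ℕ → ℝ → ℝ :=
    fun p θ => c p.1 * cos ((p.1 + 1) * θ) * (c p.2 * cos ((p.2 + 1) * θ))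
  have hF_le (p : ℕ × ℕ) (θ : ℝ) : ‖F p θ‖ ≤ |c p.1| * |c p.2| := by
    simp only [F, norm_mul, Real.norm_eq_abs]
    gcongr <;> exact mul_le_of_le_one_right (abs_nonneg _) (Real.abs_cos_le_one _)
  have hbound : Summable fun p : ℕ × ℕ => |c p.1| * |c p.2| :=
    hc.abs.mul_of_nonneg hc.abs (fun _ => abs_nonneg _) (fun _ => abs_nonneg _)
  have hF_sum (θ : ℝ) : HasSum (F · θ) (f θ ^ 2) :=
    sq (f θ) ▸ (hf θ).mul (hf θ) (hbound.of_norm_bounded (hF_le · θ))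
  have hF_int : HasSum (fun p => ∫ θ in (0:ℝ)..(2 * π), F p θ) (∫ θ in (0:ℝ)..(2 * π), f θ ^ 2) :=
    intervalIntegral.hasSum_integral_of_dominated_convergence (fun p _ => |c p.1| * |c p.2|)
      (fun p => (by fun_prop : Continuous (F p)).aestronglyMeasurable)
      (fun p => ae_of_all _ fun θ _ => hF_le p θ) (ae_of_all _ fun _ _ => hbound)
      intervalIntegrable_const (ae_of_all _ fun θ _ => hF_sum θ)
  have hF_orth (p : ℕ × ℕ) :
      ∫ θ in (0:ℝ)..(2 * π), F p θ = if p.1 = p.2 then π * c p.1 ^ 2 else 0 := by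
    simp only [F, mul_mul_mul_comm (c p.1), intervalIntegral.integral_const_mul,
      integral_cos_succ_mul_cos_succ]
    split_ifs with h
    · rw [h, mul_comm, sq]
    · rw [mul_zero]
  simp only [hF_orth] at hF_int
  rw [← (hasSum_ite_eq_diag_iff (g := fun n => π * c n ^ 2)).mp hF_int |>.tsum_eq, tsum_mul_left]

lemma hasSum_log_norm_one_sub_mul_exp {r : ℝ} (hr : |r| < 1) (θ : ℝ) :
    HasSum (fun n : ℕ => -(r ^ (n + 1) / (n + 1)) * cos ((n + 1) * θ))
      (Real.log ‖1 - (r : ℂ) * Complex.exp (θ * Complex.I)‖) := by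
  have hz : ‖(r : ℂ) * Complex.exp (θ * Complex.I)‖ < 1 := by
    rwa [norm_mul, Complex.norm_exp_ofReal_mul_I, Complex.norm_real, mul_one, Real.norm_eq_abs]
  have h := ((Complex.hasSum_taylorSeries_neg_log' hz).mapL Complex.reCLM).neg
  rw [Complex.reCLM_apply, Complex.neg_re, Complex.log_re, neg_neg] at h
  refine h.congr_fun fun n => ?_
  rw [mul_pow, ← Complex.exp_nat_mul, ← mul_assoc]
  norm_cast
  rw [Complex.reCLM_apply, Complex.div_natCast_re, Complex.re_ofReal_mul,
    Complex.exp_ofReal_mul_I_re]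
  push_cast
  ring

/-- For `0 ≤ r < 1`, `∫_0^{2π} (log|1 - r e^{iθ}|)² dθ = π · Li₂(r²)`. -/
theorem integral_sq_log_abs_one_sub_circle (r : ℝ) (hr0 : 0 ≤ r) (hr1 : r < 1) :
    ∫ θ in (0:ℝ)..(2 * π),
        (Real.log ‖1 - (r : ℂ) * Complex.exp (θ * Complex.I)‖) ^ 2
      = π * ∑' n : ℕ, (r ^ 2) ^ (n + 1) / ((n : ℝ) + 1) ^ 2 := by
  have hr : |r| < 1 := abs_lt.mpr ⟨by linarith, hr1⟩
  rw [integral_sq_eq_of_hasSum_cos (hasSum_log_norm_one_sub_mul_exp hr)]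
  congr 1
  refine tsum_congr fun n => ?_
  rw [neg_sq, div_pow, ← pow_mul, ← pow_mul, mul_comm]
end

section
/- Let X be uniformly distributed on the open unit disc and let z be in the unit disc. Then E[log|z - X|] = (|z|² - 1)/2. -/
/-!
In polar coordinates the integral over the disc becomes `∫₀¹ 2πr · m(r) dr`, where `m(r)` is the
mean of `log ‖z - ·‖` over the circle of radius `r`. By Jensen's formula for `w ↦ w - z`,
`m(r) = log (max r ‖z‖)`, and the remaining one-variable integral is elementary.
-/

open Real Complex MeasureTheory

/-- The uniform probability measure on the open unit disc in `ℂ`. -/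
noncomputable def unifDisc : Measure ℂ :=
  (volume (Metric.ball (0 : ℂ) 1))⁻¹ • volume.restrict (Metric.ball (0 : ℂ) 1)

open Metric Set

theorem Complex.polarCoord_symm_eq_circleMap (p : ℝ × ℝ) :
    Complex.polarCoord.symm p = circleMap 0 p.1 p.2 := by
  rw [Complex.polarCoord_symm_apply, circleMap_zero, Complex.exp_mul_I, ← ofReal_cos,
    ← ofReal_sin]

lemma setIntegral_Ioo_circleMap_eq_two_pi_smul_circleAverage {E : Type*}
    [NormedAddCommGroup E] [NormedSpace ℝ E] (f : ℂ → E) (c : ℂ) (r : ℝ) :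
    ∫ θ in Ioo (-π) π, f (circleMap c r θ) = (2 * π) • circleAverage f c r := by
  have hperiod := (periodic_circleMap c r).comp f |>.intervalIntegral_add_eq (-π) 0
  rw [circleAverage_def, smul_inv_smul₀ two_pi_pos.ne', ← integral_Ioc_eq_integral_Ioo,
    ← intervalIntegral.integral_of_le (by linarith [pi_pos])]
  simpa [show -π + 2 * π = π by ring] using hperiod

theorem Complex.integrableOn_comp_polarCoord_symm {E : Type*} [NormedAddCommGroup E]
    [NormedSpace ℝ E] {f : ℂ → E} (hf : Integrable f) :
    IntegrableOn (fun p : ℝ × ℝ ↦ p.1 • f (Complex.polarCoord.symm p)) polarCoord.target := by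
  have hg : Integrable (f ∘ measurableEquivRealProd.symm) :=
    (volume_preserving_equiv_real_prod.symm.integrable_comp_emb
      measurableEquivRealProd.symm.measurableEmbedding).mpr hf
  refine ((integrableOn_image_iff_integrableOn_abs_det_fderiv_smul volume
    polarCoord.open_target.measurableSet
    (fun p _ ↦ (hasFDerivAt_polarCoord_symm p).hasFDerivWithinAt) polarCoord.symm.injOn
    _).mp hg.integrableOn).congr_fun (fun p hp ↦ ?_) polarCoord.open_target.measurableSet
  dsimp only
  rw [det_fderivPolarCoordSymm, abs_of_pos hp.1]
  rfl

theorem setIntegral_ball_eq_integral_circleAverage {E : Type*} [NormedAddCommGroup E]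
    [NormedSpace ℝ E] {f : ℂ → E} {R : ℝ} (hf : IntegrableOn f (ball 0 R)) :
    ∫ w in ball 0 R, f w = ∫ r in Ioo 0 R, (2 * π * r) • circleAverage f 0 r := by
  set F := (ball (0 : ℂ) R).indicator f
  set S : Set (ℝ × ℝ) := Ioo 0 R ×ˢ Ioo (-π) π with hS_def
  have hS : MeasurableSet S := measurableSet_Ioo.prod measurableSet_Ioo
  have hS_target : S ⊆ polarCoord.target := prod_mono Ioo_subset_Ioi_self subset_rfl
  have hF_polar : EqOn (fun p : ℝ × ℝ ↦ p.1 • F (Complex.polarCoord.symm p))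
      (S.indicator fun p ↦ p.1 • f (circleMap 0 p.1 p.2)) polarCoord.target := by
    rintro p ⟨hp₁ : 0 < p.1, hp₂⟩
    have hball : circleMap 0 p.1 p.2 ∈ ball 0 R ↔ p ∈ S := by
      simp [S, abs_of_pos hp₁, hp₁, hp₂]
    simp only [F, Complex.polarCoord_symm_eq_circleMap]
    by_cases hpS : p ∈ S
    · rw [indicator_of_mem hpS, indicator_of_mem (hball.mpr hpS)]
    · rw [indicator_of_notMem hpS, indicator_of_notMem (mt hball.mp hpS), smul_zero]
  have hint : IntegrableOn (fun p : ℝ × ℝ ↦ p.1 • f (circleMap 0 p.1 p.2)) S := by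
    have h := (Complex.integrableOn_comp_polarCoord_symm
      ((integrable_indicator_iff measurableSet_ball).mpr hf)).congr_fun hF_polar
      polarCoord.open_target.measurableSet
    refine (h.mono_set hS_target).congr_fun (fun p hp ↦ ?_) hS
    simp [indicator_of_mem hp]
  calc ∫ w in ball 0 R, f w = ∫ w, F w := (integral_indicator measurableSet_ball).symm
    _ = ∫ p in polarCoord.target, p.1 • F (Complex.polarCoord.symm p) :=
      (Complex.integral_comp_polarCoord_symm F).symm
    _ = ∫ p in S, p.1 • f (circleMap 0 p.1 p.2) := by
      rw [setIntegral_congr_fun polarCoord.open_target.measurableSet hF_polar,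
        setIntegral_indicator hS, inter_eq_right.mpr hS_target]
    _ = ∫ r in Ioo 0 R, ∫ θ in Ioo (-π) π, r • f (circleMap 0 r θ) := by
      rw [hS_def, IntegrableOn, Measure.volume_eq_prod, ← Measure.prod_restrict] at hint
      rw [hS_def, Measure.volume_eq_prod, ← Measure.prod_restrict]
      exact integral_prod _ hint
    _ = ∫ r in Ioo 0 R, (2 * π * r) • circleAverage f 0 r := by
      simp_rw [integral_smul, setIntegral_Ioo_circleMap_eq_two_pi_smul_circleAverage, smul_smul,
        mul_comm]

lemma circleAverage_log_norm_sub_const_eq_log_max {a : ℂ} {r : ℝ} (hr : 0 < r) :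
    circleAverage (Real.log ‖· - a‖) 0 r = Real.log (max r ‖a‖) := by
  rw [circleAverage_log_norm_sub_const_eq_log_radius_add_posLog hr.ne', zero_sub, norm_neg,
    posLog_eq_log_max_one (by positivity), ← log_mul hr.ne' (by positivity),
    mul_max_of_nonneg _ _ hr.le, mul_one, mul_inv_cancel_left₀ hr.ne']

lemma integrableOn_log_norm_ball (ρ : ℝ) :
    IntegrableOn (fun u : ℂ ↦ Real.log ‖u‖) (ball 0 ρ) := by
  rw [integrableOn_fun_norm_addHaar, Complex.finrank_real_complex]
  simpa using (continuous_mul_log.integrableOn_Icc (a := 0) (b := ρ)).mono_set Ioo_subset_Icc_self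

lemma integrableOn_log_norm_sub_ball (z : ℂ) (R : ℝ) :
    IntegrableOn (fun w : ℂ ↦ Real.log ‖z - w‖) (ball 0 R) := by
  have h := ((integrable_indicator_iff measurableSet_ball).mpr
    (integrableOn_log_norm_ball (‖z‖ + R))).comp_sub_left z
  refine h.integrableOn.congr_fun (fun w hw ↦ ?_) measurableSet_ball
  have : z - w ∈ ball (0 : ℂ) (‖z‖ + R) := by
    rw [mem_ball_zero_iff] at hw ⊢
    exact (norm_sub_le z w).trans_lt (by linarith)
  simp [indicator_of_mem this]

theorem integral_mul_log (a b : ℝ) :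
    ∫ x in a..b, x * Real.log x =
      b ^ 2 * (2 * Real.log b - 1) / 4 - a ^ 2 * (2 * Real.log a - 1) / 4 := by
  have hcont : Continuous fun x : ℝ ↦ x ^ 2 * (2 * Real.log x - 1) / 4 := by
    have : (fun x : ℝ ↦ x ^ 2 * (2 * Real.log x - 1) / 4) =
        fun x ↦ x * (2 * (x * Real.log x) - x) / 4 := by
      ext x; ring
    rw [this]
    fun_prop
  refine integral_eq_of_hasDerivAt_off_countable _ _ (countable_singleton 0)
    hcont.continuousOn (fun x hx ↦ ?_) (continuous_mul_log.intervalIntegrable a b)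
  have hx : x ≠ 0 := hx.2
  refine (((hasDerivAt_pow 2 x).fun_mul
    (((hasDerivAt_log hx).const_mul 2).sub_const 1)).div_const 4).congr_deriv ?_
  field_simp
  ring

lemma integral_mul_log_max {a : ℝ} (ha₀ : 0 ≤ a) (ha₁ : a ≤ 1) :
    ∫ r in 0..1, r * Real.log (max r a) = (a ^ 2 - 1) / 4 := by
  have h_inner : EqOn (fun r ↦ r * Real.log (max r a)) (fun r ↦ Real.log a * r) (uIcc 0 a) := by
    intro r hr
    rw [uIcc_of_le ha₀] at hr
    simp only [max_eq_right hr.2, mul_comm]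
  have h_outer : EqOn (fun r ↦ r * Real.log (max r a)) (fun r ↦ r * Real.log r) (uIcc a 1) := by
    intro r hr
    rw [uIcc_of_le ha₁] at hr
    simp only [max_eq_left hr.1]
  rw [← intervalIntegral.integral_add_adjacent_intervals (b := a)
      ((intervalIntegrable_congr (h_inner.mono uIoc_subset_uIcc)).mpr
        ((continuous_const_mul (Real.log a)).intervalIntegrable _ _))
      ((intervalIntegrable_congr (h_outer.mono uIoc_subset_uIcc)).mpr
        (continuous_mul_log.intervalIntegrable _ _)),
    intervalIntegral.integral_congr h_inner, intervalIntegral.integral_congr h_outer,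
    intervalIntegral.integral_const_mul, integral_id, integral_mul_log]
  simp only [Real.log_one]
  ring

/-- If `X` is uniform on the unit disc and `z` is in the unit disc, then
`E[log|z - X|] = (|z|² - 1)/2`. -/
theorem expectation_log_abs_sub_uniform (z : ℂ) (hz : ‖z‖ < 1) :
    ∫ w, Real.log (‖z - w‖) ∂unifDisc = ((‖z‖) ^ 2 - 1) / 2 := by
  have h_shell : EqOn (fun r ↦ (2 * π * r) • circleAverage (fun w ↦ Real.log ‖z - w‖) 0 r)
      (fun r ↦ 2 * π * (r * Real.log (max r ‖z‖))) (Ioo 0 1) := by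
    intro r hr
    simp_rw [norm_sub_rev z, circleAverage_log_norm_sub_const_eq_log_max hr.1, smul_eq_mul]
    ring
  have h_disc : ∫ w in ball 0 1, Real.log ‖z - w‖ = π * (‖z‖ ^ 2 - 1) / 2 := by
    rw [setIntegral_ball_eq_integral_circleAverage (integrableOn_log_norm_sub_ball z 1),
      setIntegral_congr_fun measurableSet_Ioo h_shell, integral_const_mul,
      ← integral_Ioc_eq_integral_Ioo, ← intervalIntegral.integral_of_le zero_le_one,
      integral_mul_log_max (norm_nonneg z) hz.le]
    ring
  rw [unifDisc, integral_smul_measure, h_disc]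
  simp only [Complex.volume_ball, ENNReal.ofReal_one, one_pow, one_mul, ENNReal.toReal_inv,
    ENNReal.coe_toReal, NNReal.coe_real_pi, smul_eq_mul]
  field_simp
end

section
/- Let f be an injective holomorphic function on an open set D ⊆ ℂ and K ⊆ D a measurable set. Then the Lebesgue area of f(K) equals ∫_K |f'(z)|² dA(z). -/
open Complex MeasureTheory

/-! By the change-of-variables formula for injective maps, the area of `f '' K` is the integral
over `K` of the absolute real Jacobian of `f`. At each point the real derivative of `f` is
multiplication by `f' z`, whose real determinant is the field norm
`N_{ℂ/ℝ}(f' z) = |f' z|²`. -/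

theorem ContinuousLinearMap.det_restrictScalars_real_eq_normSq {E : Type*}
    [NormedAddCommGroup E] [NormedSpace ℂ E] [FiniteDimensional ℂ E] (L : E →L[ℂ] E) :
    (L.restrictScalars ℝ).det = normSq L.det := by
  rw [← Algebra.norm_complex_apply]
  exact LinearMap.det_restrictScalars

theorem HasDerivAt.hasFDerivWithinAt_restrictScalars_real {f : ℂ → ℂ} {f' z : ℂ}
    (h : HasDerivAt f f' z) (s : Set ℂ) :
    HasFDerivWithinAt f ((ContinuousLinearMap.toSpanSingleton ℂ f').restrictScalars ℝ) s z :=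
  (h.hasFDerivAt.restrictScalars ℝ).hasFDerivWithinAt

/-- Area theorem: if `f` is injective and holomorphic on an open set `D ⊆ ℂ` and `K ⊆ D`
is measurable, then the Lebesgue area of `f(K)` equals `∫_K |f'(z)|² dA(z)`. -/
theorem area_image_of_injective_holomorphic (D : Set ℂ) (hD : IsOpen D) (f : ℂ → ℂ)
    (hf : DifferentiableOn ℂ f D) (hinj : Set.InjOn f D)
    (K : Set ℂ) (hK : MeasurableSet K) (hKD : K ⊆ D) :
    volume (f '' K) = ∫⁻ z in K, ENNReal.ofReal (‖deriv f z‖ ^ 2) := by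
  have hderiv (z : ℂ) (hz : z ∈ K) := ((hf.differentiableAt
    (hD.mem_nhds (hKD hz))).hasDerivAt).hasFDerivWithinAt_restrictScalars_real K
  rw [← lintegral_abs_det_fderiv_eq_addHaar_image volume hK hderiv (hinj.mono hKD)]
  refine lintegral_congr fun z => ?_
  rw [ContinuousLinearMap.det_restrictScalars_real_eq_normSq,
    ContinuousLinearMap.det_toSpanSingleton, abs_of_nonneg (normSq_nonneg _), normSq_eq_norm_sq]
end

section
/- Let X be uniformly distributed on the open unit disc and r ∈ (0,1). Then for all t ≤ r - 1/(1+r), P(r - Re(1/(r - X)) ≤ t) = 1/(4(r-t)²), and for all t ≥ r + 1/(1-r), P(r - Re(1/(r - X)) > t) = 1/(4(t-r)²). -/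
open Real Complex MeasureTheory

lemma mem_ball_iff_sq (z : ℂ) (c R : ℝ) (hR : 0 < R) :
    z ∈ Metric.ball (c:ℂ) R ↔ (z.re - c)^2 + z.im^2 < R^2 := by
  rw [Metric.mem_ball, Complex.dist_eq, Complex.norm_def, Complex.normSq_apply]
  rw [show ((z - c).re * (z - c).re + (z - c).im * (z - c).im)
      = (z.re - c)^2 + z.im^2 by simp; ring]
  rw [Real.sqrt_lt' hR]

lemma mem_closedBall_iff_sq (z : ℂ) (c R : ℝ) (hR : 0 ≤ R) :
    z ∈ Metric.closedBall (c:ℂ) R ↔ (z.re - c)^2 + z.im^2 ≤ R^2 := by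
  rw [Metric.mem_closedBall, Complex.dist_eq, Complex.norm_def, Complex.normSq_apply]
  rw [show ((z - c).re * (z - c).re + (z - c).im * (z - c).im)
      = (z.re - c)^2 + z.im^2 by simp; ring]
  conv_lhs => rw [← Real.sqrt_sq hR]
  exact Real.sqrt_le_sqrt_iff (by positivity)

lemma unifDisc_of_squeeze (S : Set ℂ) (hS : MeasurableSet S) (c R : ℝ) (hR : 0 ≤ R)
    (h1 : Metric.ball (c:ℂ) R ⊆ S ∩ Metric.ball 0 1)
    (h2 : S ∩ Metric.ball 0 1 ⊆ Metric.closedBall (c:ℂ) R) :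
    unifDisc S = ENNReal.ofReal (R^2) := by
  have hv : volume (S ∩ Metric.ball (0:ℂ) 1) = .ofReal R ^ 2 * NNReal.pi := by
    refine le_antisymm ?_ ?_
    · exact (measure_mono h2).trans_eq (Complex.volume_closedBall _ R)
    · exact (Complex.volume_ball (c:ℂ) R) ▸ measure_mono h1
  have hpip : (0:ℝ) < NNReal.pi := NNReal.coe_real_pi ▸ Real.pi_pos
  have hpi0 : (NNReal.pi : ENNReal) ≠ 0 := by
    rw [ne_eq, ENNReal.coe_eq_zero]
    exact_mod_cast hpip.ne'
  have hpit : (NNReal.pi : ENNReal) ≠ ⊤ := ENNReal.coe_ne_top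
  rw [unifDisc, Measure.smul_apply, Measure.restrict_apply hS, hv,
    Complex.volume_ball]
  rw [← ENNReal.ofReal_pow hR]
  simp only [ENNReal.ofReal_one, one_pow, one_mul, smul_eq_mul]
  rw [mul_comm (ENNReal.ofReal (R^2)) _, ← mul_assoc,
    ENNReal.inv_mul_cancel hpi0 hpit, one_mul]

set_option maxHeartbeats 1600000 in
/-- Tails of `Y = r - Re(1/(r - X))` for `X` uniform on the unit disc and `r ∈ (0,1)`:
for `t ≤ r - 1/(1+r)`, `P(Y ≤ t) = 1/(4(r-t)²)`, and for `t ≥ r + 1/(1-r)`,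
`P(Y > t) = 1/(4(t-r)²)`. -/
theorem tails_of_Y (r : ℝ) (hr0 : 0 < r) (hr1 : r < 1) :
    (∀ t : ℝ, t ≤ r - 1 / (1 + r) →
        unifDisc {z : ℂ | r - (((r : ℂ) - z)⁻¹).re ≤ t}
          = ENNReal.ofReal (1 / (4 * (r - t) ^ 2))) ∧
    (∀ t : ℝ, r + 1 / (1 - r) ≤ t →
        unifDisc {z : ℂ | r - (((r : ℂ) - z)⁻¹).re > t}
          = ENNReal.ofReal (1 / (4 * (t - r) ^ 2))) := by
  have hre : ∀ z : ℂ, (((r : ℂ) - z)⁻¹).re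
      = (r - z.re) / ((r - z.re)^2 + z.im^2) := by
    intro z
    rw [Complex.inv_re, Complex.normSq_apply]
    simp only [Complex.sub_re, Complex.ofReal_re, Complex.sub_im, Complex.ofReal_im, zero_sub]
    ring_nf
  have hm : Measurable fun z : ℂ => r - (((r:ℂ) - z)⁻¹).re :=
    measurable_const.sub
      (Complex.measurable_re.comp ((measurable_const.sub measurable_id).inv))
  have hDpos : ∀ z : ℂ, z ≠ (r:ℂ) → 0 < (r - z.re)^2 + z.im^2 := by
    intro z h
    have h0 : (r:ℂ) - z ≠ 0 := sub_ne_zero.2 (Ne.symm h)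
    have := Complex.normSq_pos.2 h0
    rw [Complex.normSq_apply] at this
    simp only [Complex.sub_re, Complex.ofReal_re, Complex.sub_im, Complex.ofReal_im,
      zero_sub] at this
    nlinarith [this]
  constructor
  · intro t ht
    obtain ⟨s, hs⟩ : ∃ s : ℝ, s = r - t := ⟨_, rfl⟩
    have hs1 : 1 / (1 + r) ≤ s := by rw [hs]; linarith
    have hsp : 0 < s := lt_of_lt_of_le (by positivity) hs1
    have h1s : (1:ℝ) ≤ s * (1 + r) := (div_le_iff₀ (by linarith)).1 hs1
    obtain ⟨R, hR⟩ : ∃ R : ℝ, R = 1 / (2 * s) := ⟨_, rfl⟩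
    have hRp : 0 < R := by rw [hR]; positivity
    have h2sR : 2 * s * R = 1 := by rw [hR]; field_simp
    obtain ⟨c, hc⟩ : ∃ c : ℝ, c = r - R := ⟨_, rfl⟩
    have htr : t < r := by
      have : 0 < 1/(1+r) := by positivity
      linarith
    have hole : c + R = r := by rw [hc]; ring
    have hble : -1 ≤ c - R := by
      have h2R : 2 * R * 1 ≤ 2 * R * (s * (1+r)) :=
        mul_le_mul_of_nonneg_left h1s (by positivity)
      have h4 : 2 * R * (s * (1+r)) = 1 + r := by
        rw [show 2*R*(s*(1+r)) = (2*s*R)*(1+r) by ring, h2sR, one_mul]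
      rw [hc]; linarith
    rw [unifDisc_of_squeeze _ (measurableSet_le hm measurable_const) c R hRp.le ?_ ?_]
    · congr 1
      have hrt : (0:ℝ) < r - t := by linarith
      rw [hR, hs]; field_simp; ring
    · -- ball ⊆ S ∩ ball 0 1
      intro z hz
      rw [mem_ball_iff_sq _ _ _ hRp, hc] at hz
      have hkey : (r - z.re)^2 + z.im^2 < 2 * R * (r - z.re) := by nlinarith
      have hD : 0 < (r - z.re)^2 + z.im^2 := by
        nlinarith [sq_nonneg (r - z.re), sq_nonneg z.im]
      constructor
      · show r - (((r : ℂ) - z)⁻¹).re ≤ t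
        rw [hre z]
        have h3 : s * ((r - z.re)^2 + z.im^2) < s * (2 * R * (r - z.re)) :=
          mul_lt_mul_of_pos_left hkey hsp
        have h4 : s * (2 * R * (r - z.re)) = r - z.re := by
          rw [show s * (2 * R * (r - z.re)) = (2*s*R) * (r - z.re) by ring, h2sR, one_mul]
        have h5 : s ≤ (r - z.re) / ((r - z.re)^2 + z.im^2) := by
          rw [le_div_iff₀ hD]; linarith
        linarith
      · have hxa : z.re < c + R := by nlinarith [hz, sq_nonneg z.im, hRp]
        have hxb : c - R < z.re := by nlinarith [hz, sq_nonneg z.im, hRp]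
        have hy2 : z.im^2 < (c + R - z.re) * (z.re - (c - R)) := by nlinarith [hz]
        have hprod : (c + R - z.re) * (z.re - (c - R)) ≤ (1 - z.re) * (z.re + 1) := by
          apply mul_le_mul (by linarith) (by linarith) (by linarith) (by linarith)
        have hlt : z.re^2 + z.im^2 < 1 := by nlinarith
        have : z ∈ Metric.ball ((0:ℝ):ℂ) 1 := by
          rw [mem_ball_iff_sq _ _ _ one_pos]; simpa using hlt
        simpa using this
    · -- S ∩ ball 0 1 ⊆ closedBall
      rintro z ⟨hz1, _⟩
      rw [mem_closedBall_iff_sq _ _ _ hRp.le, hc]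
      simp only [Set.mem_setOf_eq, hre z] at hz1
      rcases eq_or_ne z (r:ℂ) with h | h
      · exfalso
        rw [h] at hz1
        simp at hz1
        linarith
      · have hD := hDpos z h
        have h5 : s ≤ (r - z.re) / ((r - z.re)^2 + z.im^2) := by linarith
        rw [le_div_iff₀ hD] at h5
        have h3 : 2 * R * (s * ((r - z.re)^2 + z.im^2)) ≤ 2 * R * (r - z.re) :=
          mul_le_mul_of_nonneg_left h5 (by positivity)
        have h4 : 2 * R * (s * ((r - z.re)^2 + z.im^2)) = (r - z.re)^2 + z.im^2 := by
          rw [show 2 * R * (s * ((r - z.re)^2 + z.im^2))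
            = (2*s*R) * ((r - z.re)^2 + z.im^2) by ring, h2sR, one_mul]
        nlinarith
  · intro t ht
    obtain ⟨u, hu⟩ : ∃ u : ℝ, u = t - r := ⟨_, rfl⟩
    have h1r : (0:ℝ) < 1 - r := by linarith
    have hu1 : 1 / (1 - r) ≤ u := by rw [hu]; linarith
    have hup : 0 < u := lt_of_lt_of_le (div_pos one_pos h1r) hu1
    have h1u : (1:ℝ) ≤ u * (1 - r) := (div_le_iff₀ h1r).1 hu1
    obtain ⟨R, hR⟩ : ∃ R : ℝ, R = 1 / (2 * u) := ⟨_, rfl⟩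
    have hRp : 0 < R := by rw [hR]; positivity
    have h2uR : 2 * u * R = 1 := by rw [hR]; field_simp
    obtain ⟨c, hc⟩ : ∃ c : ℝ, c = r + R := ⟨_, rfl⟩
    have hale : c + R ≤ 1 := by
      have h2R : 2 * R * 1 ≤ 2 * R * (u * (1-r)) :=
        mul_le_mul_of_nonneg_left h1u (by positivity)
      have h4 : 2 * R * (u * (1-r)) = 1 - r := by
        rw [show 2*R*(u*(1-r)) = (2*u*R)*(1-r) by ring, h2uR, one_mul]
      rw [hc]; linarith
    have hble : -1 ≤ c - R := by rw [hc]; linarith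
    rw [unifDisc_of_squeeze _ (measurableSet_lt measurable_const hm) c R hRp.le ?_ ?_]
    · congr 1
      have htr : (0:ℝ) < t - r := by
        have := (div_pos one_pos h1r).trans_le hu1
        rw [hu] at this; exact this
      rw [hR, hu]; field_simp; ring
    · intro z hz
      rw [mem_ball_iff_sq _ _ _ hRp, hc] at hz
      have hkey : (r - z.re)^2 + z.im^2 < 2 * R * (z.re - r) := by nlinarith
      have hD : 0 < (r - z.re)^2 + z.im^2 := by
        nlinarith [sq_nonneg (r - z.re), sq_nonneg z.im]
      constructor
      · show t < r - (((r : ℂ) - z)⁻¹).re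
        rw [hre z]
        have h3 : u * ((r - z.re)^2 + z.im^2) < u * (2 * R * (z.re - r)) :=
          mul_lt_mul_of_pos_left hkey hup
        have h4 : u * (2 * R * (z.re - r)) = z.re - r := by
          rw [show u * (2 * R * (z.re - r)) = (2*u*R) * (z.re - r) by ring, h2uR, one_mul]
        have h5 : (r - z.re) / ((r - z.re)^2 + z.im^2) < -u := by
          rw [div_lt_iff₀ hD]; nlinarith
        linarith
      · have hxa : z.re < c + R := by nlinarith [hz, sq_nonneg z.im, hRp]
        have hxb : c - R < z.re := by nlinarith [hz, sq_nonneg z.im, hRp]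
        have hy2 : z.im^2 < (c + R - z.re) * (z.re - (c - R)) := by nlinarith [hz]
        have hprod : (c + R - z.re) * (z.re - (c - R)) ≤ (1 - z.re) * (z.re + 1) := by
          apply mul_le_mul (by linarith) (by linarith) (by linarith) (by linarith)
        have hlt : z.re^2 + z.im^2 < 1 := by nlinarith
        have : z ∈ Metric.ball ((0:ℝ):ℂ) 1 := by
          rw [mem_ball_iff_sq _ _ _ one_pos]; simpa using hlt
        simpa using this
    · rintro z ⟨hz1, _⟩
      rw [mem_closedBall_iff_sq _ _ _ hRp.le, hc]
      simp only [Set.mem_setOf_eq, gt_iff_lt, hre z] at hz1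
      have hz1' : (r - z.re) / ((r - z.re)^2 + z.im^2) < -u := by rw [hu]; linarith
      rcases eq_or_ne z (r:ℂ) with h | h
      · exfalso
        rw [h] at hz1'
        simp at hz1'
        linarith
      · have hD := hDpos z h
        rw [div_lt_iff₀ hD] at hz1'
        have h5 : u * ((r - z.re)^2 + z.im^2) ≤ z.re - r := by nlinarith
        have h3 : 2 * R * (u * ((r - z.re)^2 + z.im^2)) ≤ 2 * R * (z.re - r) :=
          mul_le_mul_of_nonneg_left h5 (by positivity)
        have h4 : 2 * R * (u * ((r - z.re)^2 + z.im^2)) = (r - z.re)^2 + z.im^2 := by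
          rw [show 2 * R * (u * ((r - z.re)^2 + z.im^2))
            = (2*u*R) * ((r - z.re)^2 + z.im^2) by ring, h2uR, one_mul]
        nlinarith
end

section
/- Let X be uniformly distributed on the open unit disc, r ∈ (0,1), and Y = r - Re(1/(r - X)). Then for all t > r, P(Y > t) ≤ min(1, 1/(4(t-r)²)). -/
open Real Complex MeasureTheory

/-!
The event `Y > t` says `Re (1 / (r - X)) < -(t - r)`, and `{w | Re (1 / w) < -s}` is the open
disc of radius `1 / (2s)` tangent at `0` to the imaginary axis. So the event lies in a disc of
area `π / (4 (t - r)²)`, whose uniform-disc probability is at most `1 / (4 (t - r)²)`.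
-/

lemma Complex.mem_ball_of_re_inv_lt_neg {s : ℝ} (hs : 0 < s) {w : ℂ} (hw : (w⁻¹).re < -s) :
    w ∈ Metric.ball (-((2 * s)⁻¹ : ℝ) : ℂ) (2 * s)⁻¹ := by
  set ρ := (2 * s)⁻¹ with hρ
  have hw0 : w ≠ 0 := by
    rintro rfl
    simp only [inv_zero, zero_re] at hw
    linarith
  rw [inv_re, div_lt_iff₀ (normSq_pos.mpr hw0)] at hw
  have hre : 2 * ρ * w.re < -normSq w :=
    calc 2 * ρ * w.re < 2 * ρ * (-s * normSq w) := by gcongr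
      _ = -normSq w := by rw [hρ]; field_simp
  have hexpand : normSq (w + ρ) = normSq w + 2 * ρ * w.re + ρ ^ 2 := by
    simp only [normSq_apply, add_re, add_im, ofReal_re, ofReal_im, add_zero]
    ring
  rw [mem_ball_iff_norm, sub_neg_eq_add, ← sq_lt_sq₀ (norm_nonneg _) (by positivity),
    Complex.sq_norm, hexpand]
  linarith

lemma unifDisc_eq_cond : unifDisc = ProbabilityTheory.cond volume (Metric.ball (0 : ℂ) 1) := rfl

instance : IsProbabilityMeasure unifDisc := by
  rw [unifDisc_eq_cond]
  exact ProbabilityTheory.cond_isProbabilityMeasure_of_finite (by simp [NNReal.pi_ne_zero])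
    (by simp)

lemma unifDisc_le_volume_div_pi (A : Set ℂ) : unifDisc A ≤ volume A / NNReal.pi := by
  rw [unifDisc_eq_cond, ProbabilityTheory.cond_apply measurableSet_ball, Complex.volume_ball,
    ENNReal.ofReal_one, one_pow, one_mul, ENNReal.div_eq_inv_mul]
  gcongr
  exact Set.inter_subset_right

lemma unifDisc_ball_le (c : ℂ) (ρ : ℝ) :
    unifDisc (Metric.ball c ρ) ≤ ENNReal.ofReal ρ ^ 2 := by
  refine (unifDisc_le_volume_div_pi _).trans_eq ?_
  rw [Complex.volume_ball, ENNReal.mul_div_cancel_right (by simp [NNReal.pi_ne_zero]) (by simp)]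

theorem tail_bound_of_Y_general (r : ℝ) (t : ℝ) (ht : r < t) :
    unifDisc {z : ℂ | r - (((r : ℂ) - z)⁻¹).re > t}
      ≤ ENNReal.ofReal (min 1 (1 / (4 * (t - r) ^ 2))) := by
  have hs : 0 < t - r := sub_pos.mpr ht
  have hsub : {z : ℂ | r - (((r : ℂ) - z)⁻¹).re > t}
      ⊆ Metric.ball ((r + (2 * (t - r))⁻¹ : ℝ) : ℂ) (2 * (t - r))⁻¹ := by
    intro z hz
    have hre : (((r : ℂ) - z)⁻¹).re < -(t - r) := by
      simp only [Set.mem_ofPred_eq] at hz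
      linarith
    have hw := Complex.mem_ball_of_re_inv_lt_neg hs hre
    rw [mem_ball_iff_norm] at hw
    rw [mem_ball_iff_norm']
    convert hw using 2
    push_cast
    ring
  rw [ENNReal.ofReal_min, ENNReal.ofReal_one]
  refine le_min prob_le_one ?_
  calc unifDisc _ ≤ unifDisc (Metric.ball _ _) := measure_mono hsub
    _ ≤ ENNReal.ofReal (2 * (t - r))⁻¹ ^ 2 := unifDisc_ball_le _ _
    _ = ENNReal.ofReal (1 / (4 * (t - r) ^ 2)) := by
      rw [← ENNReal.ofReal_pow (by positivity)]
      congr 1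
      field_simp
      ring

/-- For `X` uniform on the unit disc, `r ∈ (0,1)` and `Y = r - Re(1/(r - X))`:
for all `t > r`, `P(Y > t) ≤ min(1, 1/(4(t-r)²))`. -/
theorem tail_bound_of_Y (r : ℝ) (hr0 : 0 < r) (hr1 : r < 1) (t : ℝ) (ht : r < t) :
    unifDisc {z : ℂ | r - (((r : ℂ) - z)⁻¹).re > t}
      ≤ ENNReal.ofReal (min 1 (1 / (4 * (t - r) ^ 2))) :=
  tail_bound_of_Y_general r t ht
end

section
/- Let X be uniformly distributed on the open unit disc and r ∈ [1/2, 1]. Then the distribution function F_r(x) = P(log|r - X| ≤ x) satisfies F_r(x) = e^{2x} for x ≤ log(1-r), F_r(x) = 1 for x ≥ log 2, and F_r is Lipschitz on ℝ with Lipschitz constant at most 4π. -/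
open Real Complex MeasureTheory

/-!
Off the null set `{r}`, the event `log ‖r - X‖ ≤ x` is `X ∈ closedBall r (exp x)`. While that
disc lies in the closed unit disc its probability is its area over `π`, namely `exp (2 x)`; once
`exp x ≥ 1 + r` it contains `𝔻`. Truncating the radius at `1 + r`, the increase of the
distribution function from `x` to `y` is at most the area of the annulus between the truncated
radii over `π`, and `t ↦ (min (exp t) (1 + r)) ^ 2` is `2 (1 + r) ^ 2`-Lipschitz, with
`2 (1 + r) ^ 2 ≤ 8 < 4 π`.
-/

open Metric

lemma Real.min_exp_sub_min_exp_le {a b R : ℝ} (hR : 0 ≤ R) (hab : a ≤ b) :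
    min (Real.exp b) R - min (Real.exp a) R ≤ min (Real.exp b) R * (b - a) := by
  rcases le_total (Real.exp a) R with ha | ha
  · have hexp : Real.exp b * (1 - (b - a)) ≤ Real.exp a :=
      calc Real.exp b * (1 - (b - a)) ≤ Real.exp b * Real.exp (a - b) := by
            gcongr; linarith [add_one_le_exp (a - b)]
        _ = Real.exp a := by rw [← Real.exp_add]; ring_nf
    rw [min_eq_left ha]
    have hu : 0 ≤ min (Real.exp b) R := le_min (Real.exp_pos b).le hR
    rcases le_total (b - a) 1 with h | h
    · nlinarith [min_le_left (Real.exp b) R]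
    · nlinarith [Real.exp_pos a]
  · have hb : R ≤ Real.exp b := ha.trans (Real.exp_le_exp.mpr hab)
    rw [min_eq_right ha, min_eq_right hb]
    nlinarith

lemma Complex.volume_real_closedBall (c : ℂ) {ρ : ℝ} (hρ : 0 ≤ ρ) :
    volume.real (closedBall c ρ) = ρ ^ 2 * π := by
  simp [measureReal_def, hρ]

lemma setOf_log_norm_sub_le_ae_eq {E : Type*} [NormedAddCommGroup E] [MeasurableSpace E]
    (μ : Measure E) [NullSingletonClass μ] (c : E) (x : ℝ) :
    {z | Real.log ‖c - z‖ ≤ x} =ᵐ[μ] closedBall c (Real.exp x) := by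
  have h : {z | Real.log ‖c - z‖ ≤ x} \ {c} = closedBall c (Real.exp x) \ {c} := by
    ext z
    simp only [Set.mem_sdiff, Set.mem_ofPred_eq, Set.mem_singleton_iff, mem_closedBall,
      dist_eq_norm, norm_sub_rev z c, and_congr_left_iff]
    intro hz
    exact log_le_iff_le_exp (norm_pos_iff.mpr (sub_ne_zero.mpr (Ne.symm hz)))
  have hc : μ {c} = 0 := measure_singleton c
  exact (sdiff_null_ae_eq_self hc).symm.trans (by rw [h]; exact sdiff_null_ae_eq_self hc)

lemma Complex.volume_ball_zero_one : volume (ball (0 : ℂ) 1) = ENNReal.ofReal π := by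
  simp [← ENNReal.ofReal_coe_nnreal]

lemma unifDisc_apply (s : Set ℂ) :
    unifDisc s = volume (s ∩ ball 0 1) / ENNReal.ofReal π := by
  rw [unifDisc, Measure.smul_apply, Measure.restrict_apply' measurableSet_ball,
    Complex.volume_ball_zero_one, smul_eq_mul, ENNReal.div_eq_inv_mul]

lemma unifDisc_eq_one_of_ball_subset {s : Set ℂ} (hs : ball 0 1 ⊆ s) : unifDisc s = 1 := by
  rw [unifDisc_apply, Set.inter_eq_right.mpr hs, Complex.volume_ball_zero_one]
  exact ENNReal.div_self (by simp [pi_pos]) ENNReal.ofReal_ne_top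

instance inst_s16 : IsProbabilityMeasure unifDisc :=
  ⟨unifDisc_eq_one_of_ball_subset (Set.subset_univ _)⟩

instance : NullSingletonClass unifDisc :=
  ⟨fun z => by
    simp [unifDisc_apply, measure_mono_null Set.inter_subset_left (measure_singleton z)]⟩

lemma unifDisc_real_apply (s : Set ℂ) : unifDisc.real s = volume.real (s ∩ ball 0 1) / π := by
  rw [measureReal_def, unifDisc_apply, ENNReal.toReal_div, ENNReal.toReal_ofReal pi_nonneg,
    measureReal_def]

lemma unifDisc_real_le_volume_real_div {s : Set ℂ} (hs : volume s ≠ ⊤) :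
    unifDisc.real s ≤ volume.real s / π := by
  rw [unifDisc_real_apply]
  gcongr
  exact Set.inter_subset_left

lemma unifDisc_real_of_subset_closedBall {s : Set ℂ} (hs : s ⊆ closedBall 0 1) :
    unifDisc.real s = volume.real s / π := by
  have hnull : volume (s \ ball 0 1) = 0 := by
    refine measure_mono_null (fun z hz => ?_) (Measure.addHaar_sphere volume (0 : ℂ) 1)
    exact mem_sphere.mpr (le_antisymm (hs hz.1) (not_lt.mp hz.2))
  rw [unifDisc_real_apply, measureReal_def, measureReal_def,
    ← measure_inter_add_sdiff s measurableSet_ball, hnull, add_zero]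

section closedBall

variable {c : ℂ}

lemma unifDisc_real_closedBall_of_norm_add_le {ρ : ℝ} (hρ : 0 ≤ ρ) (h : ‖c‖ + ρ ≤ 1) :
    unifDisc.real (closedBall c ρ) = ρ ^ 2 := by
  have hsub : closedBall c ρ ⊆ closedBall 0 1 :=
    closedBall_subset_closedBall' (by rwa [dist_zero_right, add_comm])
  rw [unifDisc_real_of_subset_closedBall hsub, Complex.volume_real_closedBall c hρ]
  field_simp [pi_pos.ne']

lemma unifDisc_closedBall_of_norm_add_one_le {ρ : ℝ} (h : ‖c‖ + 1 ≤ ρ) :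
    unifDisc (closedBall c ρ) = 1 := by
  refine unifDisc_eq_one_of_ball_subset fun z hz => ?_
  have := dist_triangle z 0 c
  rw [dist_zero_right, dist_zero_left] at this
  rw [mem_ball_zero_iff] at hz
  rw [mem_closedBall]
  linarith

lemma unifDisc_real_closedBall_min_norm_add_one (ρ : ℝ) :
    unifDisc.real (closedBall c (min ρ (‖c‖ + 1))) = unifDisc.real (closedBall c ρ) := by
  rcases le_total ρ (‖c‖ + 1) with h | h
  · rw [min_eq_left h]
  · simp only [min_eq_right h, measureReal_def, unifDisc_closedBall_of_norm_add_one_le h,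
      unifDisc_closedBall_of_norm_add_one_le le_rfl]

lemma unifDisc_real_closedBall_sub_le {ρ₁ ρ₂ : ℝ} (hρ₁ : 0 ≤ ρ₁) (h : ρ₁ ≤ ρ₂) :
    unifDisc.real (closedBall c ρ₂) - unifDisc.real (closedBall c ρ₁) ≤ ρ₂ ^ 2 - ρ₁ ^ 2 := by
  have hsub := closedBall_subset_closedBall (x := c) h
  calc unifDisc.real (closedBall c ρ₂) - unifDisc.real (closedBall c ρ₁)
      ≤ unifDisc.real (closedBall c ρ₂ \ closedBall c ρ₁) := le_measureReal_sdiff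
    _ ≤ volume.real (closedBall c ρ₂ \ closedBall c ρ₁) / π :=
        unifDisc_real_le_volume_real_div
          (measure_ne_top_of_subset Set.sdiff_subset measure_closedBall_lt_top.ne)
    _ = ρ₂ ^ 2 - ρ₁ ^ 2 := by
        rw [measureReal_sdiff hsub measurableSet_closedBall measure_closedBall_lt_top.ne,
          Complex.volume_real_closedBall c (hρ₁.trans h), Complex.volume_real_closedBall c hρ₁]
        field_simp [pi_pos.ne']

lemma unifDisc_real_closedBall_exp_sub_le {a b : ℝ} (hab : a ≤ b) :
    unifDisc.real (closedBall c (Real.exp b)) - unifDisc.real (closedBall c (Real.exp a))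
      ≤ 2 * (‖c‖ + 1) ^ 2 * (b - a) := by
  set R := ‖c‖ + 1
  have hR : 0 ≤ R := by positivity
  set u := min (Real.exp b) R
  set v := min (Real.exp a) R
  have hv : 0 ≤ v := le_min (Real.exp_pos a).le hR
  have hvu : v ≤ u := min_le_min_right R (Real.exp_le_exp.mpr hab)
  have huR : u ≤ R := min_le_right _ _
  have hlog : u - v ≤ u * (b - a) := Real.min_exp_sub_min_exp_le hR hab
  calc _ = unifDisc.real (closedBall c u) - unifDisc.real (closedBall c v) := by
        rw [unifDisc_real_closedBall_min_norm_add_one, unifDisc_real_closedBall_min_norm_add_one]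
    _ ≤ u ^ 2 - v ^ 2 := unifDisc_real_closedBall_sub_le hv hvu
    _ ≤ 2 * R ^ 2 * (b - a) := by
        nlinarith [mul_le_mul_of_nonneg_left hlog (by linarith : 0 ≤ u + v),
          mul_le_mul_of_nonneg_right huR (sub_nonneg.mpr hab)]

lemma lipschitzWith_unifDisc_real_closedBall_exp :
    LipschitzWith (2 * (‖c‖₊ + 1) ^ 2) fun x => unifDisc.real (closedBall c (Real.exp x)) := by
  refine LipschitzWith.of_le_add_mul _ fun x y => ?_
  push_cast
  rcases le_total x y with h | h
  · refine le_add_of_le_of_nonneg (measureReal_mono ?_) (by positivity)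
    exact closedBall_subset_closedBall (Real.exp_le_exp.mpr h)
  · rw [Real.dist_eq, abs_of_nonneg (sub_nonneg.mpr h)]
    linarith [unifDisc_real_closedBall_exp_sub_le (c := c) h]

end closedBall

lemma unifDisc_real_setOf_log_norm_sub_le (c : ℂ) (x : ℝ) :
    unifDisc.real {z | Real.log ‖c - z‖ ≤ x} = unifDisc.real (closedBall c (Real.exp x)) :=
  measureReal_congr (setOf_log_norm_sub_le_ae_eq unifDisc c x)

/-- For `X` uniform on the unit disc and `r ∈ [1/2, 1]`, the distribution function
`F_r(x) = P(log|r - X| ≤ x)` satisfies `F_r(x) = e^{2x}` for `x ≤ log(1-r)` (this condition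
is written as `e^x ≤ 1 - r`, which is vacuous for `r = 1`), `F_r(x) = 1` for `x ≥ log 2`,
and `F_r` is Lipschitz with constant `4π`. -/
theorem cdf_log_abs_sub_uniform (r : ℝ) (hr0 : 1 / 2 ≤ r) (hr1 : r ≤ 1) :
    (∀ x : ℝ, Real.exp x ≤ 1 - r →
        (unifDisc {z : ℂ | Real.log (‖(r : ℂ) - z‖) ≤ x}).toReal
          = Real.exp (2 * x)) ∧
    (∀ x : ℝ, Real.log 2 ≤ x →
        (unifDisc {z : ℂ | Real.log (‖(r : ℂ) - z‖) ≤ x}).toReal = 1) ∧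
    (∀ x y : ℝ,
        |(unifDisc {z : ℂ | Real.log (‖(r : ℂ) - z‖) ≤ x}).toReal
            - (unifDisc {z : ℂ | Real.log (‖(r : ℂ) - z‖) ≤ y}).toReal|
          ≤ 4 * π * |x - y|) := by
  have hr : ‖(r : ℂ)‖ = r := by simp [abs_of_nonneg (by linarith : (0 : ℝ) ≤ r)]
  simp only [← measureReal_def, unifDisc_real_setOf_log_norm_sub_le]
  refine ⟨fun x hx => ?_, fun x hx => ?_, fun x y => ?_⟩
  · rw [unifDisc_real_closedBall_of_norm_add_le (Real.exp_pos x).le (by linarith),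
      ← Real.exp_nat_mul]
    norm_num
  · have h2 : 2 ≤ Real.exp x := (Real.log_le_iff_le_exp two_pos).mp hx
    rw [measureReal_def, unifDisc_closedBall_of_norm_add_one_le (by linarith), ENNReal.toReal_one]
  · have hlip := (lipschitzWith_unifDisc_real_closedBall_exp (c := r)).dist_le_mul x y
    push_cast at hlip
    rw [Real.dist_eq, Real.dist_eq, hr] at hlip
    refine hlip.trans (mul_le_mul_of_nonneg_right ?_ (abs_nonneg _))
    nlinarith [pi_gt_three]
end
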